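/- arXiv:2107.10128 — 2 statements merged into one kernel-verified Lean document; each statement's English description precedes it below -/
import Mathlib

section
/- Let A be any model of SAPP. Then there exists a map f : A → A that is surjective, not injective, and satisfies: for all x, y ∈ A, O(x,y) holds if and only if O(f(x), f(y)) holds. (This is the key step showing that equality is not definable in terms of O alone in any model of SAPP.) -/
open FirstOrder Language Structure BoundedFormula

/-- The relation symbols of the language `L`: a single binary relation `O`. -/
inductive PerpRel : ℕ → Type
  | o : PerpRel 2

/-- The first-order language with a single binary relation symbol `O`. -/
def L : Language := ⟨fun _ => Empty, PerpRel⟩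
  deriving IsRelational

/-- The binary relation symbol `O` of `L`. -/
abbrev oSym : L.Relations 2 := .o

/-- `O(xᵢ, xⱼ)` as a bounded formula. -/
def oBF {n : ℕ} (i j : Fin n) : L.BoundedFormula Empty n :=
  oSym.boundedFormula₂ (&i) (&j)

/-- Finite conjunction of a list of bounded formulas. -/
def andAll {n : ℕ} : List (L.BoundedFormula Empty n) → L.BoundedFormula Empty n
  | [] => ⊤
  | φ :: l => φ ⊓ andAll l

/-- λ₁ₙ : ∀y₁…∀yₙ∀s(O(s,y₁) ∧ … ∧ O(s,yₙ) → ∃t(t ≠ y₁ ∧ … ∧ t ≠ yₙ ∧ O(s,t))).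
Variables: y₁,…,yₙ are de Bruijn indices 0,…,n-1, s is index n, t is index n+1. -/
def lam1 (n : ℕ) : L.Sentence :=
  ((andAll ((List.finRange n).map fun i => oBF (Fin.last n) i.castSucc)).imp
    ((andAll ((List.finRange n).map fun i =>
        ∼((&(Fin.last (n + 1))) =' (&(i.castSucc.castSucc)))) ⊓
      oBF ((Fin.last n).castSucc) (Fin.last (n + 1))).ex)).alls

/-- λ₂ₙ : ∀y₁…∀yₙ∃s(¬O(s,y₁) ∧ … ∧ ¬O(s,yₙ)).
Variables: y₁,…,yₙ are de Bruijn indices 0,…,n-1, s is index n. -/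
def lam2 (n : ℕ) : L.Sentence :=
  ((andAll ((List.finRange n).map fun i => ∼(oBF (Fin.last n) i.castSucc))).ex).alls

/-- λ₃ : ∀x ¬O(x,x). -/
def lam3 : L.Sentence := (∼(oBF (0 : Fin 1) 0)).alls

/-- λ₄ : ∀x∀y(O(x,y) → O(y,x)). -/
def lam4 : L.Sentence := ((oBF (0 : Fin 2) 1).imp (oBF (1 : Fin 2) 0)).alls

/-- λ₅ : ∀x∃y O(x,y). -/
def lam5 : L.Sentence := ((oBF (0 : Fin 2) 1).ex).alls

/-- λ₆ : ∀x∀y∀z∀t(O(x,z) ∧ O(y,z) ∧ O(x,t) → O(y,t)). -/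
def lam6 : L.Sentence :=
  ((oBF (0 : Fin 4) 2 ⊓ oBF (1 : Fin 4) 2 ⊓ oBF (0 : Fin 4) 3).imp (oBF (1 : Fin 4) 3)).alls

/-- The theory SAPP. -/
def SAPP : L.Theory :=
  {φ | ∃ n, 1 ≤ n ∧ φ = lam1 n} ∪ {φ | ∃ n, 2 ≤ n ∧ φ = lam2 n} ∪ {lam3, lam4, lam5, lam6}

/-!
Pick `s` with a neighbour `a` (λ₅, λ₄). By λ₁ no finite subset of the neighbourhood
`N(s) = {y | O(s, y)}` contains all of it, so `N(s)` is infinite, and by λ₄ and λ₆ all points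
of `N(s)` have the same neighbours. Hence any self-map that moves points only inside `N(s)` preserves and reflects `O`.
Since `N(s) ⊕ N(s) ≃ N(s)`, the infinite set `N(s)` has a surjective, non-injective self-map;
extended by the identity outside `N(s)`, it is the required map.
-/

open Function

theorem Infinite.exists_surjective_not_injective (α : Type*) [Infinite α] :
    ∃ f : α → α, Surjective f ∧ ¬ Injective f := by
  obtain ⟨e⟩ : Nonempty (α ⊕ α ≃ α) :=
    Cardinal.eq.1 (Cardinal.add_def α α ▸ Cardinal.add_mk_eq_self)
  refine ⟨Sum.elim id id ∘ e.symm, fun a => ⟨e (.inl a), by simp⟩, fun hinj => ?_⟩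
  obtain ⟨a⟩ := Infinite.nonempty α
  have hinl_eq_inr := @hinj (e (.inl a)) (e (.inr a)) (by simp)
  simp at hinl_eq_inr

theorem Set.Infinite.exists_surjective_not_injective_mapsTo {α : Type*} {s : Set α}
    (hs : s.Infinite) :
    ∃ f : α → α, Surjective f ∧ ¬ Injective f ∧ MapsTo f s s ∧ ∀ x ∉ s, f x = x := by
  classical
  have := hs.to_subtype
  obtain ⟨g, hg_surj, hg_inj⟩ := Infinite.exists_surjective_not_injective s
  let e := Equiv.Set.sumCompl s
  refine ⟨e ∘ Sum.map g id ∘ e.symm, ?_, fun hinj => ?_, fun x hx => ?_, fun x hx => ?_⟩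
  · exact e.surjective.comp ((hg_surj.sumMap surjective_id).comp e.symm.surjective)
  · have : Injective (Sum.map g id) :=
      ((e.injective.of_comp_iff _).1 hinj).of_comp_right e.symm.surjective
    exact hg_inj (Sum.map_injective.1 this).1
  · simp [e, Equiv.Set.sumCompl_symm_apply_of_mem hx]
  · simp [e, Equiv.Set.sumCompl_symm_apply_of_notMem hx]

theorem Set.Infinite.exists_surjective_not_injective_rel_iff {α : Type*} {R : α → α → Prop}
    (hR : ∀ x y, R x y → R y x) {s : Set α} (hs : s.Infinite)
    (hs_indist : ∀ u ∈ s, ∀ v ∈ s, ∀ w, R u w → R v w) :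
    ∃ f : α → α, Surjective f ∧ ¬ Injective f ∧ ∀ x y, R x y ↔ R (f x) (f y) := by
  obtain ⟨f, hsurj, hinj, hmaps, hfix⟩ := hs.exists_surjective_not_injective_mapsTo
  have hleft : ∀ x y, R x y ↔ R (f x) y := fun x y => by
    by_cases hx : x ∈ s
    · exact ⟨hs_indist x hx _ (hmaps hx) y, hs_indist _ (hmaps hx) x hx y⟩
    · rw [hfix x hx]
  refine ⟨f, hsurj, hinj, fun x y => ?_⟩
  calc R x y ↔ R (f x) y := hleft x y
    _ ↔ R y (f x) := ⟨hR _ _, hR _ _⟩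
    _ ↔ R (f y) (f x) := hleft y (f x)
    _ ↔ R (f x) (f y) := ⟨hR _ _, hR _ _⟩

local notation "O(" x ", " y ")" => RelMap oSym ![x, y]

section Semantics

variable {M : Type*} [L.Structure M]

theorem realize_andAll {n : ℕ} (l : List (L.BoundedFormula Empty n)) (v : Empty → M)
    (xs : Fin n → M) : (andAll l).Realize v xs ↔ ∀ φ ∈ l, φ.Realize v xs := by
  induction l with
  | nil => simp [andAll]
  | cons φ l ih => simp [andAll, ih]

theorem realize_lam1 (n : ℕ) :
    M ⊨ lam1 n ↔ ∀ (y : Fin n → M) (s : M), (∀ i, O(s, y i)) →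
      ∃ t, (∀ i, t ≠ y i) ∧ O(s, t) := by
  simp only [lam1, Sentence.Realize, realize_alls]
  refine ⟨fun h y s => ?_, fun h xs => ?_⟩
  · simpa [realize_andAll, oBF] using h (Fin.snoc y s)
  · simpa [realize_andAll, oBF, Fin.init] using h (Fin.init xs) (xs (Fin.last n))

theorem realize_lam4 : M ⊨ lam4 ↔ ∀ x y : M, O(x, y) → O(y, x) := by
  simp only [Sentence.Realize, lam4, oBF, Function.comp_apply, realize_alls, realize_imp,
    realize_rel₂, Term.realize_var, Sum.elim_inr]
  exact ⟨fun h x y => h ![x, y], fun h xs => h _ _⟩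

theorem realize_lam5 : M ⊨ lam5 ↔ ∀ x : M, ∃ y, O(x, y) := by
  simp only [Sentence.Realize, lam5, oBF, Function.comp_apply, realize_alls, realize_ex,
    realize_rel₂, Term.realize_var, Sum.elim_inr, Fin.snoc_apply_zero]
  exact ⟨fun h x => h ![x], fun h xs => h _⟩

theorem realize_lam6 :
    M ⊨ lam6 ↔ ∀ x y z t : M, O(x, z) → O(y, z) → O(x, t) → O(y, t) := by
  simp only [Sentence.Realize, lam6, oBF, Function.comp_apply, realize_alls, realize_imp,
    realize_inf, realize_rel₂, Term.realize_var, Sum.elim_inr, and_imp]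
  exact ⟨fun h x y z t => h ![x, y, z, t], fun h xs => h _ _ _ _⟩

namespace SAPP

variable [M ⊨ SAPP] {x y z t s : M}

theorem rel_symm (h : O(x, y)) : O(y, x) :=
  realize_lam4.1 (Theory.realize_sentence_of_mem SAPP (by simp [SAPP])) x y h

theorem exists_rel (x : M) : ∃ y, O(x, y) :=
  realize_lam5.1 (Theory.realize_sentence_of_mem SAPP (by simp [SAPP])) x

theorem rel_of_rel_of_rel (hxz : O(x, z)) (hyz : O(y, z)) (hxt : O(x, t)) : O(y, t) :=
  realize_lam6.1 (Theory.realize_sentence_of_mem SAPP (by simp [SAPP])) x y z t hxz hyz hxt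

theorem exists_rel_notMem (F : Finset M) (hF : F.Nonempty) (hsF : ∀ y ∈ F, O(s, y)) :
    ∃ t ∉ F, O(s, t) := by
  have hlam1 := (realize_lam1 F.card).1 (Theory.realize_sentence_of_mem (M := M) SAPP
    (Or.inl (Or.inl ⟨F.card, hF.card_pos, rfl⟩)))
  obtain ⟨t, htF, hst⟩ :=
    hlam1 (fun i => F.equivFin.symm i) s fun i => hsF _ (F.equivFin.symm i).2
  exact ⟨t, fun ht => htF (F.equivFin ⟨t, ht⟩) (by simp), hst⟩

theorem infinite_setOf_rel (hsx : O(s, x)) : {y | O(s, y)}.Infinite := fun hfin => by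
  obtain ⟨t, ht, hst⟩ := exists_rel_notMem (s := s) hfin.toFinset ⟨x, by simpa⟩ (by simp)
  exact ht (by simpa using hst)

end SAPP

end Semantics

/-- any model of SAPP has a surjective, non-injective self-map preserving and
reflecting O. -/
theorem statement_6 (M : Type*) [L.Structure M] [Nonempty M] (h : M ⊨ SAPP) :
    ∃ f : M → M, Function.Surjective f ∧ ¬ Function.Injective f ∧
      ∀ x y : M, RelMap oSym ![x, y] ↔ RelMap oSym ![f x, f y] := by
  obtain ⟨a⟩ := ‹Nonempty M›
  obtain ⟨s, has⟩ := SAPP.exists_rel a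
  exact (SAPP.infinite_setOf_rel (SAPP.rel_symm has)).exists_surjective_not_injective_rel_iff
    (fun _ _ => SAPP.rel_symm)
    fun u hu v hv _ => SAPP.rel_of_rel_of_rel (SAPP.rel_symm hu) (SAPP.rel_symm hv)
end

section
/- Let A be any model of SAPP. Then there is no first-order formula φ(x,y) of the empty language (i.e., a formula built using only equality, with two free variables) such that A ⊨ ∀x∀y(O(x,y) ↔ φ(x,y)), where φ is interpreted in A via the inclusion of the empty language into L. (O is not definable by equality alone in any model of SAPP.) -/
/-!
Permutations of `M` are automorphisms for the empty language, and they act transitively on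
pairs of distinct elements, so a formula of the empty language takes the same truth value on all
such pairs. In a model of SAPP, however, `O` holds on some pair of distinct elements (λ₃, λ₅)
and fails on another (λ₂ with `n = 2`).
-/

open FirstOrder Language Structure BoundedFormula

/-- Every type is (uniquely) a structure for the empty language. -/
instance (M : Type*) : Language.empty.Structure M := Language.emptyStructure

@[simp]
lemma realize_oBF {M : Type*} [L.Structure M] {n : ℕ} (i j : Fin n) (v : Empty → M)
    (xs : Fin n → M) : (oBF i j).Realize v xs ↔ RelMap oSym ![xs i, xs j] := by
  simp [oBF]

section
variable {M : Type*} [L.Structure M]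

lemma SAPP.irrefl (h : M ⊨ SAPP) (x : M) : ¬ RelMap oSym ![x, x] := by
  simpa [Fin.snoc] using realize_alls.1 (h.realize_of_mem lam3 (by simp [SAPP])) ![x]

lemma SAPP.exists_rel_s7 (h : M ⊨ SAPP) (x : M) : ∃ y, RelMap oSym ![x, y] := by
  simpa [Fin.snoc] using realize_alls.1 (h.realize_of_mem lam5 (by simp [SAPP])) ![x]

lemma SAPP.exists_not_rel_not_rel (h : M ⊨ SAPP) (a b : M) :
    ∃ s, ¬ RelMap oSym ![s, a] ∧ ¬ RelMap oSym ![s, b] := by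
  simpa [andAll, List.finRange, List.ofFn_succ, Fin.snoc] using
    realize_alls.1 (h.realize_of_mem (lam2 2) (Or.inl (Or.inr ⟨2, le_rfl, rfl⟩))) ![a, b]

variable [Nonempty M]

lemma SAPP.exists_ne_rel (h : M ⊨ SAPP) : ∃ a b : M, a ≠ b ∧ RelMap oSym ![a, b] := by
  obtain ⟨x⟩ := ‹Nonempty M›
  obtain ⟨y, hxy⟩ := SAPP.exists_rel_s7 h x
  exact ⟨x, y, by rintro rfl; exact SAPP.irrefl h x hxy, hxy⟩

lemma SAPP.exists_ne_not_rel (h : M ⊨ SAPP) : ∃ a b : M, a ≠ b ∧ ¬ RelMap oSym ![a, b] := by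
  obtain ⟨x, y, hxy, -⟩ := SAPP.exists_ne_rel h
  obtain ⟨s, hsx, hsy⟩ := SAPP.exists_not_rel_not_rel h x y
  by_cases hs : s = x
  · exact ⟨s, y, hs ▸ hxy, hsy⟩
  · exact ⟨s, x, hs, hsx⟩

end

lemma FirstOrder.Language.empty.realize_formula_iff_of_injective {M α : Type*} [Finite α]
    (φ : Language.empty.Formula α) {v w : α → M} (hv : v.Injective) (hw : w.Injective) :
    φ.Realize v ↔ φ.Realize w := by
  obtain ⟨σ, hσ⟩ := Equiv.Perm.exists_extending_pair v w hv hw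
  rw [← funext hσ]
  exact (StrongHomClass.realize_formula σ φ).symm

/-- in no model of SAPP is O definable by a formula of the empty language
(a formula built using only equality). -/
theorem statement_7 (M : Type*) [L.Structure M] [Nonempty M] (h : M ⊨ SAPP) :
    ¬ ∃ φ : Language.empty.Formula (Fin 2),
      ∀ a b : M, RelMap oSym ![a, b] ↔ φ.Realize ![a, b] := by
  rintro ⟨φ, hφ⟩
  obtain ⟨a, b, hab, hO⟩ := SAPP.exists_ne_rel h
  obtain ⟨c, d, hcd, hnO⟩ := SAPP.exists_ne_not_rel h
  have hφ_iff := Language.empty.realize_formula_iff_of_injective φ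
    (injective_pair_iff_ne.2 hab) (injective_pair_iff_ne.2 hcd)
  exact hnO ((hφ c d).2 (hφ_iff.1 ((hφ a b).1 hO)))
end
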